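/- Let g ∈ L^∞(𝕋), g ≠ 0, and let f^M = I·O be an inner–outer factorisation of a maximal function of ker T_g (I inner, O ∈ H² outer). If ker T_g = O·K_α for some inner function α, then K_α = K_{zI}. -/

import Mathlib

open MeasureTheory Complex
open scoped Real ComplexConjugate ENNReal

noncomputable section

namespace ToeplitzKernels

/-- We model the unit circle `𝕋` as `AddCircle (2 * π)`. -/
abbrev UnitCircle := AddCircle (2 * Real.pi)

instance : Fact (0 < 2 * Real.pi) := ⟨by positivity⟩

/-- The normalised Haar (arc-length) measure on the circle. -/
abbrev muT : Measure UnitCircle := AddCircle.haarAddCircle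

/-- `L²(𝕋)`. -/
abbrev L2T := Lp ℂ 2 muT

/-- The coordinate function `z` on the circle. -/
def zf : UnitCircle → ℂ := fun x => fourier 1 x

/-- A (plain) function belongs to `H²`: it is square integrable and all its Fourier
coefficients of negative index vanish. -/
def InH2 (f : UnitCircle → ℂ) : Prop :=
  MemLp f 2 muT ∧ ∀ n : ℤ, n < 0 → fourierCoeff f n = 0

/-- `H²` as a subset of `L²`. -/
def H2 : Set L2T :=
  {u | ∀ n : ℤ, n < 0 → fourierCoeff (u : UnitCircle → ℂ) n = 0}

/-- A function belongs to `H^∞`: it is a bounded member of `H²`. -/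
def InHinf (f : UnitCircle → ℂ) : Prop :=
  InH2 f ∧ MemLp f ⊤ muT

/-- `f` is outer: `f ∈ H²` and the closed linear span of `{zⁿ f : n ≥ 0}` in `L²` is `H²`. -/
def IsOuter (f : UnitCircle → ℂ) : Prop :=
  InH2 f ∧
    closure ((Submodule.span ℂ
        {u : L2T | ∃ n : ℕ, (u : UnitCircle → ℂ) =ᵐ[muT] fun x => zf x ^ n * f x} :
          Submodule ℂ L2T) : Set L2T) = H2

/-- `f` is inner: `f ∈ H²` (hence in `H^∞`) and `|f| = 1` a.e. on `𝕋`. -/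
def IsInner (f : UnitCircle → ℂ) : Prop :=
  InH2 f ∧ ∀ᵐ x ∂muT, ‖f x‖ = 1

/-- The kernel of the Toeplitz operator `T_g`, as a subset of `L²`: those `f ∈ H²` with
`P⁺(g f) = 0`, i.e. all Fourier coefficients of `g·f` of index `≥ 0` vanish. -/
def kerT (g : UnitCircle → ℂ) : Set L2T :=
  {u | u ∈ H2 ∧ ∀ n : ℤ, 0 ≤ n →
    fourierCoeff (fun x => g x * (u : UnitCircle → ℂ) x) n = 0}

/-- Membership of (the a.e. class of) a plain function in `ker T_g`. -/
def InKerT (g f : UnitCircle → ℂ) : Prop :=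
  InH2 f ∧ ∀ n : ℤ, 0 ≤ n → fourierCoeff (fun x => g x * f x) n = 0

/-- The model space `K_θ = ker T_{θ̄}`. -/
def modelSpace (θ : UnitCircle → ℂ) : Set L2T :=
  kerT fun x => conj (θ x)

/-- `f` is a maximal function of `ker T_g`: `f ∈ H²` and `g f = z̄ Ō` a.e. on `𝕋`
for some outer `O ∈ H²` (equivalently, `ker T_g` is the smallest Toeplitz kernel
containing `f`). -/
def IsMaximal (g f : UnitCircle → ℂ) : Prop :=
  InH2 f ∧ ∃ O : UnitCircle → ℂ, IsOuter O ∧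
    (fun x => g x * f x) =ᵐ[muT] fun x => conj (zf x) * conj (O x)

/-- The set `w·S ⊆ L²`, for a set `S ⊆ L²` of square-integrable functions. -/
def mulSet (w : UnitCircle → ℂ) (S : Set L2T) : Set L2T :=
  {u | ∃ v ∈ S, (u : UnitCircle → ℂ) =ᵐ[muT] fun x => w x * (v : UnitCircle → ℂ) x}

/-- `w·S ⊆ L²(𝕋)`. -/
def mulMapsIntoL2 (w : UnitCircle → ℂ) (S : Set L2T) : Prop :=
  ∀ v ∈ S, MemLp (fun x => w x * (v : UnitCircle → ℂ) x) 2 muT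

/-- `w⁻¹·S ⊆ L²(𝕋)`. -/
def invMulMapsIntoL2 (w : UnitCircle → ℂ) (S : Set L2T) : Prop :=
  ∀ v ∈ S, MemLp (fun x => (w x)⁻¹ * (v : UnitCircle → ℂ) x) 2 muT

/-- An outer function `O` is square-rigid if `ker T_{z̄ Ō / O} = ℂ · O`. -/
def IsSquareRigidOuter (O : UnitCircle → ℂ) : Prop :=
  kerT (fun x => conj (zf x) * conj (O x) / O x)
    = {u : L2T | ∃ c : ℂ, (u : UnitCircle → ℂ) =ᵐ[muT] fun x => c * O x}

/-- `w ∈ H²` is square-rigid if the outer factor of `w` is square-rigid. -/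
def IsSquareRigid (w : UnitCircle → ℂ) : Prop :=
  ∃ I O : UnitCircle → ℂ, IsInner I ∧ IsOuter O ∧
    (w =ᵐ[muT] fun x => I x * O x) ∧ IsSquareRigidOuter O

/-- The (linear) dimension of a subset of `L²` (the rank of its linear span). -/
def setDim (S : Set L2T) : Cardinal :=
  Module.rank ℂ (Submodule.span ℂ S)

/-- The value at a point `l` of the open unit disc of the holomorphic extension of a
function `f ∈ H²` on the boundary. -/
def diskValue (f : UnitCircle → ℂ) (l : ℂ) : ℂ :=
  ∑' n : ℕ, fourierCoeff f (n : ℤ) * l ^ n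

/-- The reproducing kernel `k_λ^θ = (1 - conj (θ(λ)) θ)/(1 - λ̄ z)` (boundary values). -/
def kFun (θ : UnitCircle → ℂ) (l : ℂ) : UnitCircle → ℂ :=
  fun x => (1 - conj (diskValue θ l) * θ x) / (1 - conj l * zf x)

/-- The conjugate kernel `k̃_λ^θ = (θ - θ(λ))/(z - λ)` (boundary values). -/
def ktFun (θ : UnitCircle → ℂ) (l : ℂ) : UnitCircle → ℂ :=
  fun x => (θ x - diskValue θ l) / (zf x - l)

/-- The conjugation `C_ḡ f = ḡ z̄ f̄` associated to a unimodular symbol `g`. -/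
def conjC (g f : UnitCircle → ℂ) : UnitCircle → ℂ :=
  fun x => conj (g x) * conj (zf x) * conj (f x)

/-- `α` is a finite Blaschke product with exactly `k` zeroes in `𝔻` (with multiplicity). -/
def IsFiniteBlaschke (α : UnitCircle → ℂ) (k : ℕ) : Prop :=
  ∃ (c : ℂ) (a : Fin k → ℂ), ‖c‖ = 1 ∧ (∀ i, ‖a i‖ < 1) ∧
    α =ᵐ[muT] fun x => c * ∏ i, (zf x - a i) / (1 - conj (a i) * zf x)


/-! ### Auxiliary lemmas -/

lemma continuous_zf : Continuous zf := (fourier 1).continuous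

lemma aesm_conj {f : UnitCircle → ℂ} (h : AEStronglyMeasurable f muT) :
    AEStronglyMeasurable (fun x => conj (f x)) muT :=
  Complex.continuous_conj.comp_aestronglyMeasurable h

lemma norm_zf (x : UnitCircle) : ‖zf x‖ = 1 := Circle.norm_coe _

lemma mul_conj_eq_one {z : ℂ} (h : ‖z‖ = 1) : z * conj z = 1 := by
  rw [Complex.mul_conj]
  norm_cast
  simp [Complex.normSq_eq_norm_sq, h]

lemma conj_mul_eq_one {z : ℂ} (h : ‖z‖ = 1) : conj z * z = 1 := by
  rw [mul_comm]; exact mul_conj_eq_one h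

lemma zf_pow (n : ℕ) (x : UnitCircle) : zf x ^ n = fourier (n : ℤ) x := by
  induction n with
  | zero => simp [fourier_zero]
  | succ m ih =>
      rw [pow_succ, ih, show ((m+1 : ℕ) : ℤ) = (m : ℤ) + 1 from by push_cast; ring,
        fourier_add]
      rfl

lemma fourierCoeff_congr_ae {f g : UnitCircle → ℂ} (h : f =ᵐ[muT] g) (n : ℤ) :
    fourierCoeff f n = fourierCoeff g n := by
  unfold fourierCoeff
  exact integral_congr_ae (h.mono fun x hx => by simp [hx])

lemma fourierCoeff_conj (f : UnitCircle → ℂ) (n : ℤ) :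
    fourierCoeff (fun x => conj (f x)) n = conj (fourierCoeff f (-n)) := by
  unfold fourierCoeff
  rw [← integral_conj]
  congr 1
  ext x
  rw [neg_neg]
  simp only [smul_eq_mul, map_mul, ← fourier_neg]

lemma fourierCoeff_zf_mul (f : UnitCircle → ℂ) (n : ℤ) :
    fourierCoeff (fun x => zf x * f x) n = fourierCoeff f (n - 1) := by
  unfold fourierCoeff
  congr 1
  ext x
  simp only [smul_eq_mul, zf]
  rw [show -(n-1) = -n + 1 by ring, fourier_add]
  ring

lemma fourierCoeff_one (n : ℤ) (hn : n ≠ 0) :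
    fourierCoeff (fun _ : UnitCircle => (1:ℂ)) n = 0 := by
  have h0 : fourierCoeff (fun _ : UnitCircle => (1:ℂ)) n
      = fourierCoeff ((fourierLp (T := 2*Real.pi) 2 0 : L2T) : UnitCircle → ℂ) n := by
    refine (fourierCoeff_congr_ae ?_ n).symm
    exact (coeFn_fourierLp 2 0).trans (Filter.Eventually.of_forall fun x => fourier_zero)
  rw [h0, ← fourierBasis_repr, ← coe_fourierBasis, HilbertBasis.repr_self]
  simp [lp.single_apply, hn]

lemma fourierCoeff_one_zero : fourierCoeff (fun _ : UnitCircle => (1:ℂ)) 0 = 1 := by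
  unfold fourierCoeff
  simp only [neg_zero, fourier_zero, smul_eq_mul, one_mul]
  simp [integral_const]

lemma fourierCoeff_const (c : ℂ) (n : ℤ) :
    fourierCoeff (fun _ : UnitCircle => c) n = if n = 0 then c else 0 := by
  have : (fun _ : UnitCircle => c) = fun x => c * (fun _ : UnitCircle => (1:ℂ)) x := by
    ext x; simp
  rw [this, fourierCoeff.const_mul]
  by_cases hn : n = 0
  · simp [hn, fourierCoeff_one_zero]
  · simp [hn, fourierCoeff_one n hn]

lemma fourierCoeff_sub {f g : UnitCircle → ℂ} (hf : Integrable f muT)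
    (hg : Integrable g muT) (n : ℤ) :
    fourierCoeff (fun x => f x - g x) n = fourierCoeff f n - fourierCoeff g n := by
  unfold fourierCoeff
  rw [← integral_sub]
  · congr 1; ext x; simp only [smul_eq_mul]; ring
  · exact hf.bdd_mul (map_continuous (fourier (-n))).aestronglyMeasurable
      (Filter.Eventually.of_forall fun x => le_of_eq (Circle.norm_coe _))
  · exact hg.bdd_mul (map_continuous (fourier (-n))).aestronglyMeasurable
      (Filter.Eventually.of_forall fun x => le_of_eq (Circle.norm_coe _))

lemma eq_const_of_fourierCoeff {f : UnitCircle → ℂ} (hf : MemLp f 2 muT) (c : ℂ)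
    (h : ∀ n : ℤ, fourierCoeff f n = if n = 0 then c else 0) :
    f =ᵐ[muT] fun _ => c := by
  have hsub : MemLp (fun x => f x - c) 2 muT := hf.sub (memLp_const c)
  have h0 : hsub.toLp _ = 0 := by
    apply (fourierBasis (T := 2*Real.pi)).repr.injective
    ext n
    rw [fourierBasis_repr]
    rw [fourierCoeff_congr_ae hsub.coeFn_toLp n,
      fourierCoeff_sub (hf.integrable (by norm_num)) (integrable_const c) n,
      h n, fourierCoeff_const]
    by_cases hn : n = 0 <;> simp [hn]
  have h2 := hsub.coeFn_toLp
  rw [h0] at h2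
  have h3 := h2.symm.trans (Lp.coeFn_zero ℂ 2 muT)
  filter_upwards [h3] with x hx
  have hfc : f x - c = 0 := hx
  exact sub_eq_zero.mp hfc

lemma inner_toLp_eq (w : UnitCircle → ℂ) (hw : MemLp w 2 muT) (u : L2T) :
    @inner ℂ _ _ (hw.toLp w) u = ∫ x, conj (w x) * (u : UnitCircle → ℂ) x ∂muT := by
  rw [L2.inner_def]
  apply integral_congr_ae
  filter_upwards [hw.coeFn_toLp] with x hx
  rw [hx, RCLike.inner_apply, mul_comm]

lemma outer_test {O : UnitCircle → ℂ} (hO : IsOuter O) {w : UnitCircle → ℂ}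
    (hw : MemLp w 2 muT)
    (hgen : ∀ n : ℕ, (∫ x, conj (w x) * (zf x ^ n * O x) ∂muT) = 0)
    {u : L2T} (hu : u ∈ H2) :
    (∫ x, conj (w x) * (u : UnitCircle → ℂ) x ∂muT) = 0 := by
  set φ : L2T →L[ℂ] ℂ := innerSL ℂ (hw.toLp w) with hφ
  have hker : (Submodule.span ℂ
      {v : L2T | ∃ n : ℕ, (v : UnitCircle → ℂ) =ᵐ[muT] fun x => zf x ^ n * O x})
      ≤ LinearMap.ker (φ : L2T →ₗ[ℂ] ℂ) := by
    rw [Submodule.span_le]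
    rintro v ⟨n, hv⟩
    simp only [SetLike.mem_coe, LinearMap.mem_ker, ContinuousLinearMap.coe_coe]
    have hv' : φ v = ∫ x, conj (w x) * (v : UnitCircle → ℂ) x ∂muT := inner_toLp_eq w hw v
    rw [hv', ← hgen n]
    apply integral_congr_ae
    filter_upwards [hv] with x hx
    rw [hx]
  have hclosed : IsClosed (LinearMap.ker (φ : L2T →ₗ[ℂ] ℂ) : Set L2T) := ContinuousLinearMap.isClosed_ker φ
  have hsub : H2 ⊆ (LinearMap.ker (φ : L2T →ₗ[ℂ] ℂ) : Set L2T) := by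
    rw [← hO.2]
    exact closure_minimal hker hclosed
  have := hsub hu
  simpa [φ, LinearMap.mem_ker, inner_toLp_eq w hw u] using this

lemma integral_eq_fourierCoeff_zero (f : UnitCircle → ℂ) :
    ∫ x, f x ∂muT = fourierCoeff f 0 := by
  unfold fourierCoeff
  simp [fourier_zero]

lemma fourierCoeff_zf_pow_mul (f : UnitCircle → ℂ) (n : ℕ) (m : ℤ) :
    fourierCoeff (fun x => zf x ^ n * f x) m = fourierCoeff f (m - n) := by
  induction n generalizing m with
  | zero => simp
  | succ j ih =>
      have h : (fun x => zf x ^ (j+1) * f x) = fun x => zf x * (zf x ^ j * f x) := by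
        ext x; ring
      rw [h, fourierCoeff_zf_mul, ih]
      congr 1
      push_cast
      ring

/-- The constant function `1` as an element of `L²`. -/
def oneL : L2T := (memLp_const (1:ℂ)).toLp _

lemma oneL_ae : (oneL : UnitCircle → ℂ) =ᵐ[muT] fun _ => (1:ℂ) :=
  (memLp_const (1:ℂ)).coeFn_toLp

lemma oneL_mem_H2 : oneL ∈ H2 := by
  intro n hn
  rw [fourierCoeff_congr_ae oneL_ae n, fourierCoeff_one n (by omega)]

lemma outer_coeff_zero_ne {O : UnitCircle → ℂ} (hO : IsOuter O) :
    fourierCoeff O 0 ≠ 0 := by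
  intro h0
  have hgen : ∀ n : ℕ, (∫ x, conj ((1:ℂ)) * (zf x ^ n * O x) ∂muT) = 0 := by
    intro n
    simp only [map_one, one_mul]
    rw [integral_eq_fourierCoeff_zero, fourierCoeff_zf_pow_mul, zero_sub]
    rcases Nat.eq_zero_or_pos n with h | h
    · simpa [h] using h0
    · exact hO.1.2 _ (by omega)
  have htest := outer_test hO (memLp_const (1:ℂ)) hgen oneL_mem_H2
  rw [show (∫ x, conj ((1:ℂ)) * (oneL : UnitCircle → ℂ) x ∂muT) = 1 from ?_] at htest
  · exact one_ne_zero htest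
  · rw [integral_congr_ae (g := fun _ => (1:ℂ)) _, integral_const]
    · simp
    · filter_upwards [oneL_ae] with x hx
      rw [hx]; simp

lemma outer_ne_zero {O : UnitCircle → ℂ} (hO : IsOuter O) :
    ∀ᵐ x ∂muT, O x ≠ 0 := by
  have hsm := hO.1.1.aestronglyMeasurable
  set O' := hsm.mk O with hO'def
  have hae : O =ᵐ[muT] O' := hsm.ae_eq_mk
  have hE : MeasurableSet (O' ⁻¹' {0}) :=
    hsm.stronglyMeasurable_mk.measurable (measurableSet_singleton 0)
  set E := O' ⁻¹' {0}
  set w : UnitCircle → ℂ := E.indicator fun _ => (1:ℂ) with hwdef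
  have hw : MemLp w 2 muT := memLp_indicator_const 2 hE 1 (Or.inr (measure_ne_top _ _))
  have hgen : ∀ n : ℕ, (∫ x, conj (w x) * (zf x ^ n * O x) ∂muT) = 0 := by
    intro n
    rw [integral_eq_zero_of_ae]
    filter_upwards [hae] with x hx
    by_cases hxE : x ∈ E
    · have : O x = 0 := by rw [hx]; exact hxE
      simp [this]
    · simp [hwdef, Set.indicator_of_notMem hxE]
  have h0 := outer_test hO hw hgen oneL_mem_H2
  have hval : (∫ x, conj (w x) * (oneL : UnitCircle → ℂ) x ∂muT)
      = (muT E).toReal := by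
    rw [integral_congr_ae (g := E.indicator fun _ => (1:ℂ))]
    · rw [integral_indicator_const _ hE]; simp; rfl
    · filter_upwards [oneL_ae] with x hx
      rw [hx, mul_one]
      by_cases hxE : x ∈ E
      · simp [hwdef, Set.indicator_of_mem hxE]
      · simp [hwdef, Set.indicator_of_notMem hxE]
  rw [hval] at h0
  have htr : (muT E).toReal = 0 := by exact_mod_cast h0
  have hE0 : muT E = 0 := by
    rcases (ENNReal.toReal_eq_zero_iff _).mp htr with h | h
    · exact h
    · exact absurd h (measure_ne_top _ _)
  have hO'ne : ∀ᵐ x ∂muT, O' x ≠ 0 := by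
    rw [ae_iff]
    simpa [E, Set.preimage, Set.mem_setOf_eq] using hE0
  filter_upwards [hO'ne, hae] with x h1 h2
  rw [h2]; exact h1

/-- If `f^M = I·O` is an inner–outer factorisation of a maximal function of
`ker T_g` and `ker T_g = O·K_α` for some inner `α`, then `K_α = K_{zI}`. -/
theorem modelSpace_eq_of_mul_repr
    (g I O α : UnitCircle → ℂ) (hg : MemLp g ⊤ muT)
    (hgne : ¬ g =ᵐ[muT] fun _ => (0 : ℂ))
    (hI : IsInner I) (hO : IsOuter O)
    (hmax : IsMaximal g fun x => I x * O x)
    (hα : IsInner α)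
    (hker : kerT g = mulSet O (modelSpace α)) :
    modelSpace α = modelSpace fun x => zf x * I x := by
  classical
  obtain ⟨hf2, Om, hOm, heq⟩ := hmax
  have hIae := hI.2
  have hαae := hα.2
  have hOne := outer_ne_zero hO
  -- the maximal function as an element of L²
  have hfmem : MemLp (fun x => I x * O x) 2 muT := hf2.1
  set wf : L2T := hfmem.toLp _ with hwf
  have hwfae : (wf : UnitCircle → ℂ) =ᵐ[muT] fun x => I x * O x := hfmem.coeFn_toLp
  have hwfker : wf ∈ kerT g := by
    constructor
    · intro n hn
      rw [fourierCoeff_congr_ae hwfae n]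
      exact hf2.2 n hn
    · intro n hn
      have h1 : (fun x => g x * (wf : UnitCircle → ℂ) x)
          =ᵐ[muT] fun x => conj (zf x * Om x) := by
        filter_upwards [hwfae, heq] with x hx1 hx2
        show g x * (wf : UnitCircle → ℂ) x = conj (zf x * Om x)
        rw [hx1]
        calc g x * (I x * O x) = conj (zf x) * conj (Om x) := hx2
          _ = conj (zf x * Om x) := by rw [map_mul]
      rw [fourierCoeff_congr_ae h1 n, fourierCoeff_conj, fourierCoeff_zf_mul,
        hOm.1.2 _ (by omega), map_zero]
  rw [hker] at hwfker
  obtain ⟨v, hvK, hvae⟩ := hwfker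
  -- I agrees a.e. with v
  have hIv : I =ᵐ[muT] (v : UnitCircle → ℂ) := by
    filter_upwards [hvae, hwfae, hOne] with x h1 h2 h3
    have h4 : I x * O x = O x * (v : UnitCircle → ℂ) x := by rw [← h2, h1]
    have h5 : O x * I x = O x * (v : UnitCircle → ℂ) x := by rw [← h4]; ring
    exact mul_left_cancel₀ h3 h5
  have hIk : ∀ n : ℤ, 0 ≤ n → fourierCoeff (fun x => conj (α x) * I x) n = 0 := by
    intro n hn
    have h1 : (fun x => conj (α x) * I x)
        =ᵐ[muT] fun x => conj (α x) * (v : UnitCircle → ℂ) x := by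
      filter_upwards [hIv] with x hx
      rw [hx]
    rw [fourierCoeff_congr_ae h1 n]
    exact hvK.2 n hn
  -- the inner function k with α = z I k
  set k : UnitCircle → ℂ := fun x => conj (zf x * I x) * α x with hk
  have hmeasI := hI.1.1.aestronglyMeasurable
  have hmeasα := hα.1.1.aestronglyMeasurable
  have hkmeas : AEStronglyMeasurable k muT :=
    (aesm_conj (continuous_zf.aestronglyMeasurable.mul hmeasI)).mul hmeasα
  have hknorm : ∀ᵐ x ∂muT, ‖k x‖ = 1 := by
    filter_upwards [hIae, hαae] with x h1 h2
    simp [hk, norm_mul, RCLike.norm_conj, norm_zf x, h1, h2]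
  have hkmem : MemLp k 2 muT :=
    MemLp.of_bound hkmeas 1 (by filter_upwards [hknorm] with x h; rw [h])
  have hzik : (fun x => zf x * I x * k x) =ᵐ[muT] α := by
    filter_upwards [hIae] with x hx
    have h1 : ‖zf x * I x‖ = 1 := by rw [norm_mul, norm_zf, hx, one_mul]
    calc zf x * I x * (conj (zf x * I x) * α x)
        = (zf x * I x * conj (zf x * I x)) * α x := by ring
      _ = α x := by rw [mul_conj_eq_one h1, one_mul]
  have hkcoeff_neg : ∀ m : ℤ, m < 0 → fourierCoeff k m = 0 := by
    intro m hm
    have hkeq : k = fun x => conj (zf x * (conj (α x) * I x)) := by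
      ext x
      simp only [hk, map_mul, Complex.conj_conj]
      ring
    rw [hkeq, fourierCoeff_conj, fourierCoeff_zf_mul, hIk (-m - 1) (by omega), map_zero]
  set c := fourierCoeff k 0 with hc
  by_cases hext : ∃ M : ℤ, 1 ≤ M ∧ fourierCoeff k M ≠ 0
  · -- impossible case: k is non-constant
    exfalso
    obtain ⟨M, hM1, hMne⟩ := hext
    -- the test element v2 = z I (1 - c̄ k) of K_α
    set v2 : UnitCircle → ℂ := fun x => zf x * I x * (1 - conj c * k x) with hv2
    have hv2meas : AEStronglyMeasurable v2 muT :=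
      (continuous_zf.aestronglyMeasurable.mul hmeasI).mul
        (aestronglyMeasurable_const.sub (hkmeas.const_mul _))
    have hv2bound : ∀ᵐ x ∂muT, ‖v2 x‖ ≤ 1 + ‖c‖ := by
      filter_upwards [hIae, hknorm] with x h1 h2
      have : ‖v2 x‖ = ‖zf x‖ * ‖I x‖ * ‖1 - conj c * k x‖ := by
        simp [hv2, norm_mul]
      rw [this, norm_zf, h1, one_mul, one_mul]
      calc ‖1 - conj c * k x‖ ≤ ‖(1:ℂ)‖ + ‖conj c * k x‖ := norm_sub_le _ _
        _ = 1 + ‖c‖ := by rw [norm_one, norm_mul, RCLike.norm_conj, h2, mul_one]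
    have hv2mem : MemLp v2 2 muT := MemLp.of_bound hv2meas _ hv2bound
    set vL : L2T := hv2mem.toLp _ with hvL
    have hvLae : (vL : UnitCircle → ℂ) =ᵐ[muT] v2 := hv2mem.coeFn_toLp
    -- integrability facts
    have hziInt : Integrable (fun x => zf x * I x) muT := by
      refine (MemLp.of_bound (continuous_zf.aestronglyMeasurable.mul hmeasI) 1 ?_).integrable
        le_rfl
      filter_upwards [hIae] with x hx
      show ‖zf x * I x‖ ≤ 1
      rw [norm_mul, norm_zf, hx, one_mul]
    have hzikInt : Integrable (fun x => conj c * (zf x * I x * k x)) muT := by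
      refine (MemLp.of_bound (((continuous_zf.aestronglyMeasurable.mul hmeasI).mul
        hkmeas).const_mul _) ‖c‖ ?_).integrable le_rfl
      filter_upwards [hIae, hknorm] with x h1 h2
      show ‖conj c * (zf x * I x * k x)‖ ≤ ‖c‖
      rw [norm_mul, RCLike.norm_conj, norm_mul, norm_mul, norm_zf, h1, h2]
      simp
    have hvLK : vL ∈ modelSpace α := by
      constructor
      · intro n hn
        have hsplit : v2 = fun x =>
            (fun y => zf y * I y) x - (fun y => conj c * (zf y * I y * k y)) x := by
          ext x; simp only [hv2]; ring
        rw [fourierCoeff_congr_ae hvLae n, hsplit,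
          fourierCoeff_sub hziInt hzikInt n, fourierCoeff_zf_mul,
          hI.1.2 _ (by omega), fourierCoeff.const_mul,
          fourierCoeff_congr_ae hzik n, hα.1.2 _ hn]
        ring
      · intro n hn
        have hprod : (fun x => conj (α x) * (vL : UnitCircle → ℂ) x)
            =ᵐ[muT] fun x => conj (k x) - conj c := by
          filter_upwards [hvLae, hzik, hIae, hknorm] with x h1 h2 h3 h4
          rw [h1]
          have hzi1 : ‖zf x * I x‖ = 1 := by rw [norm_mul, norm_zf, h3, one_mul]
          calc conj (α x) * v2 x
              = conj (zf x * I x * k x) * (zf x * I x * (1 - conj c * k x)) := by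
                rw [h2]
            _ = (conj (zf x * I x) * (zf x * I x)) * (conj (k x) - conj c * (k x * conj (k x))) := by
                simp only [map_mul]; ring
            _ = conj (k x) - conj c := by
                rw [conj_mul_eq_one hzi1, mul_conj_eq_one h4, one_mul, mul_one]
        have hconjkInt : Integrable (fun x => conj (k x)) muT := by
          refine (MemLp.of_bound (aesm_conj hkmeas) 1 ?_).integrable le_rfl
          filter_upwards [hknorm] with x hx
          rw [RCLike.norm_conj, hx]
        rw [fourierCoeff_congr_ae hprod n,
          fourierCoeff_sub hconjkInt (integrable_const _) n,
          fourierCoeff_conj, fourierCoeff_const]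
        rcases eq_or_lt_of_le hn with h | h
        · rw [← h]
          simp [← hc]
        · rw [hkcoeff_neg (-n) (by omega), map_zero, if_neg (by omega), sub_zero]
    -- the element O·v2 of the kernel
    set w2 : UnitCircle → ℂ := fun x => O x * v2 x with hw2
    have hw2mem : MemLp w2 2 muT := by
      refine MemLp.of_le (hO.1.1.const_mul (((1 + ‖c‖ : ℝ)) : ℂ))
        (hO.1.1.aestronglyMeasurable.mul hv2meas) ?_
      filter_upwards [hv2bound] with x hx
      show ‖O x * v2 x‖ ≤ ‖(((1 + ‖c‖ : ℝ)) : ℂ) * O x‖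
      have h2 : ‖(((1 + ‖c‖ : ℝ)) : ℂ) * O x‖ = (1 + ‖c‖) * ‖O x‖ := by
        rw [norm_mul, Complex.norm_real, Real.norm_eq_abs, _root_.abs_of_nonneg (by positivity)]
      rw [norm_mul, h2, mul_comm (1 + ‖c‖)]
      exact mul_le_mul_of_nonneg_left hx (norm_nonneg _)
    set wL : L2T := hw2mem.toLp _ with hwL
    have hwLae : (wL : UnitCircle → ℂ) =ᵐ[muT] w2 := hw2mem.coeFn_toLp
    have hwLmem : wL ∈ mulSet O (modelSpace α) := by
      refine ⟨vL, hvLK, ?_⟩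
      filter_upwards [hwLae, hvLae] with x h1 h2
      rw [h1, hw2, h2]
    rw [← hker] at hwLmem
    obtain ⟨-, hTz⟩ := hwLmem
    -- compute the symbol action
    have hg2 : (fun x => g x * (wL : UnitCircle → ℂ) x)
        =ᵐ[muT] fun x => conj (Om x) * (1 - conj c * k x) := by
      filter_upwards [hwLae, heq] with x h1 h2
      rw [h1]
      have hz1 : ‖zf x‖ = 1 := norm_zf x
      calc g x * (O x * v2 x)
          = (g x * (I x * O x)) * zf x * (1 - conj c * k x) := by
            simp only [hv2]; ring
        _ = conj (zf x) * conj (Om x) * zf x * (1 - conj c * k x) := by rw [h2]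
        _ = (conj (zf x) * zf x) * (conj (Om x) * (1 - conj c * k x)) := by ring
        _ = conj (Om x) * (1 - conj c * k x) := by
            rw [conj_mul_eq_one hz1, one_mul]
    have hOmConj : MemLp (fun x => conj (Om x)) 2 muT := by
      refine MemLp.of_le hOm.1.1 (aesm_conj hOm.1.1.aestronglyMeasurable) ?_
      exact Filter.Eventually.of_forall fun x => le_of_eq (RCLike.norm_conj _)
    have hOmConjInt : Integrable (fun x => conj (Om x)) muT :=
      hOmConj.integrable (by norm_num)
    have hOmkInt : Integrable (fun x => conj c * (conj (Om x) * k x)) muT := by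
      have h1 : Integrable (fun x => k x * conj (Om x)) muT :=
        hOmConjInt.bdd_mul hkmeas (by filter_upwards [hknorm] with x hx; rw [hx])
      exact Integrable.const_mul
        (h1.congr (Filter.Eventually.of_forall fun x => mul_comm _ _)) _
    have hkereq : ∀ n : ℤ, 0 ≤ n →
        fourierCoeff (fun x => conj (Om x)) n
          - conj c * fourierCoeff (fun x => conj (Om x) * k x) n = 0 := by
      intro n hn
      have h1 := hTz n hn
      rw [fourierCoeff_congr_ae hg2 n] at h1
      have hsplit : (fun x => conj (Om x) * (1 - conj c * k x))
          = fun x => (fun y => conj (Om y)) x - (fun y => conj c * (conj (Om y) * k y)) x := by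
        ext x; ring
      rw [hsplit, fourierCoeff_sub hOmConjInt hOmkInt n, fourierCoeff.const_mul] at h1
      exact h1
    have hOm0 : fourierCoeff Om 0 ≠ 0 := outer_coeff_zero_ne hOm
    have hcne : conj c ≠ 0 := by
      intro hc0
      have h1 := hkereq 0 le_rfl
      rw [hc0, zero_mul, sub_zero, fourierCoeff_conj, neg_zero] at h1
      exact hOm0 (by simpa using h1)
    have hOmk : ∀ n : ℤ, 1 ≤ n →
        fourierCoeff (fun x => conj (Om x) * k x) n = 0 := by
      intro n hn
      have h1 := hkereq n (by omega)
      rw [fourierCoeff_conj, hOm.1.2 (-n) (by omega), map_zero, zero_sub, neg_eq_zero] at h1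
      exact (mul_eq_zero.mp h1).resolve_left hcne
    -- the test functional
    set wt : UnitCircle → ℂ := fun x => fourier (-M) x * k x with hwt
    have hwtmem : MemLp wt 2 muT := by
      refine MemLp.of_bound ((map_continuous (fourier (-M))).aestronglyMeasurable.mul hkmeas)
        1 ?_
      filter_upwards [hknorm] with x hx
      rw [norm_mul, hx, mul_one]
      exact le_of_eq (Circle.norm_coe _)
    have hgen : ∀ n : ℕ, (∫ x, conj (wt x) * (zf x ^ n * Om x) ∂muT) = 0 := by
      intro n
      have hid : (fun x => conj (wt x) * (zf x ^ n * Om x))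
          = fun x => fourier (-(-(M : ℤ) - n)) x •
              (fun y => conj ((fun z' => conj (Om z') * k z') y)) x := by
        ext x
        simp only [hwt, map_mul, smul_eq_mul, Complex.conj_conj, zf_pow, ← fourier_neg]
        rw [show -(-(M:ℤ) - n) = n + M by ring, fourier_add]
        ring
      have : (∫ x, conj (wt x) * (zf x ^ n * Om x) ∂muT)
          = fourierCoeff (fun x => conj (conj (Om x) * k x)) (-(M:ℤ) - n) := by
        rw [hid]; rfl
      rw [this, fourierCoeff_conj, show -(-(M:ℤ) - n) = M + n by ring,
        hOmk (M + n) (by omega), map_zero]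
    have htest := outer_test hOm hwtmem hgen oneL_mem_H2
    have hval : (∫ x, conj (wt x) * (oneL : UnitCircle → ℂ) x ∂muT)
        = conj (fourierCoeff k M) := by
      have hid2 : (fun x => conj (wt x) * (1:ℂ))
          = fun x => fourier (-(-(M:ℤ))) x • (fun y => conj (k y)) x := by
        ext x
        simp only [hwt, map_mul, smul_eq_mul, mul_one, neg_neg, ← fourier_neg]
      rw [integral_congr_ae (g := fun x => conj (wt x) * (1:ℂ))
        (by filter_upwards [oneL_ae] with x hx; rw [hx])]
      rw [show (∫ x, conj (wt x) * (1:ℂ) ∂muT)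
          = fourierCoeff (fun y => conj (k y)) (-(M:ℤ)) from by rw [hid2]; rfl]
      rw [fourierCoeff_conj, neg_neg]
    rw [hval] at htest
    exact hMne (by simpa using htest)
  · -- k is constant, and the model spaces agree
    push_neg at hext
    have hkc : k =ᵐ[muT] fun _ => c := by
      refine eq_const_of_fourierCoeff hkmem c fun n => ?_
      rcases lt_trichotomy n 0 with h | h | h
      · rw [hkcoeff_neg n h, if_neg (by omega)]
      · rw [h, if_pos rfl, ← hc]
      · rw [hext n (by omega), if_neg (by omega)]
    have hcnorm : ‖c‖ = 1 := by
      have hae2 : ∀ᵐ _x ∂muT, ‖c‖ = 1 := by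
        filter_upwards [hknorm, hkc] with x h1 h2
        rw [← h2]; exact h1
      exact hae2.exists.choose_spec
    have hcne : conj c ≠ 0 := by
      simp only [ne_eq, map_eq_zero]
      intro h
      rw [h] at hcnorm
      simp at hcnorm
    have hαzi : α =ᵐ[muT] fun x => c * (zf x * I x) := by
      filter_upwards [hzik, hkc] with x h1 h2
      rw [← h1, h2]; ring
    ext u
    have keyu : ∀ n : ℤ, fourierCoeff (fun x => conj (α x) * (u : UnitCircle → ℂ) x) n
        = conj c * fourierCoeff (fun x => conj (zf x * I x) * (u : UnitCircle → ℂ) x) n := by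
      intro n
      rw [fourierCoeff_congr_ae (f := fun x => conj (α x) * (u : UnitCircle → ℂ) x)
        (g := fun x => conj c * (conj (zf x * I x) * (u : UnitCircle → ℂ) x))
        (by filter_upwards [hαzi] with x hx; rw [hx, map_mul]; ring) n,
        fourierCoeff.const_mul]
    constructor
    · rintro ⟨h1, h2⟩
      refine ⟨h1, fun n hn => ?_⟩
      have h3 := h2 n hn
      rw [keyu n] at h3
      exact (mul_eq_zero.mp h3).resolve_left hcne
    · rintro ⟨h1, h2⟩
      refine ⟨h1, fun n hn => ?_⟩
      rw [keyu n, h2 n hn, mul_zero]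


end ToeplitzKernels
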